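/- Let D(g,p) = {W ∈ I_1(g) : W ∩ p^{-1}(1) ≠ ∅} and define the Average Alert Delay AAD(g,p) = (1/|D(g,p)|) · Σ_{W ∈ D(g,p)} (min{i ∈ W : p(i) = 1} − min W), and let m_AAD(g,p) = f(AAD(g,p)) for a strictly decreasing function f : ℝ → ℝ. Then m_AAD satisfies Properties 5 and 8: (a) if N ∈ I_0(g), p(i) = q(i) for all i ∉ N, |p^{-1}(1)| = |q^{-1}(1)|, |I_1(p_N)| = |I_1(q_N)|, and D(g,p) ≠ ∅, then m_AAD(g,p) = m_AAD(g,q); (b) if A ∈ I_1(g), p(i) = q(i) for all i ∉ A, |I_1(p_A)| = |I_1(q_A)|, |p^{-1}(1)| = |q^{-1}(1)|, both p and q take the value 1 somewhere in A, and min{i ∈ A : p(i) = 1} < min{i ∈ A : q(i) = 1}, then m_AAD(g,p) > m_AAD(g,q). -/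
import Mathlib


namespace TSAD

open Finset

/-- The index domain `{1, …, n}`. -/
def dom (n : ℕ) : Finset ℕ := Finset.Icc 1 n

/-- The interval `[l, u]` represented by a pair. -/
def ivl (W : ℕ × ℕ) : Finset ℕ := Finset.Icc W.1 W.2

/-- The positions in `A` where the binary sequence `s` takes the value `1` (`true`). -/
def ones (A : Finset ℕ) (s : ℕ → Bool) : Finset ℕ := A.filter (fun i => s i = true)

/-- `runs A s v` is the set of maximal intervals `[l, u] ⊆ A` on which `s` is constantly `v`
(maximal among intervals contained in `A`).  For `A = dom n` this is `I_v(s)`;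
for `A ⊆ dom n` it is `I_v(s_A)`. -/
def runs (A : Finset ℕ) (s : ℕ → Bool) (v : Bool) : Finset (ℕ × ℕ) :=
  (A ×ˢ A).filter (fun W =>
    W.1 ≤ W.2 ∧ ivl W ⊆ A ∧ (∀ i ∈ ivl W, s i = v) ∧
    (W.1 - 1 ∈ A → s (W.1 - 1) ≠ v) ∧ (W.2 + 1 ∈ A → s (W.2 + 1) ≠ v))

/-- Specification of the function `α` used in the (A)LARM scores: it assigns to each
restriction `p_A` a value in `[0,1)`, depends only on the restriction, strictly increases
when a single `0` of `p_A` is changed to a `1`, satisfies alarm timing, and early bias. -/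
structure AlphaSpec (α : Finset ℕ → (ℕ → Bool) → ℝ) : Prop where
  mem_Ico : ∀ A p, α A p ∈ Set.Ico (0 : ℝ) 1
  restrict : ∀ A (p q : ℕ → Bool), (∀ i ∈ A, p i = q i) → α A p = α A q
  mono : ∀ A (p q : ℕ → Bool) (i : ℕ), i ∈ A → p i = true → q i = false →
    (∀ j, j ≠ i → p j = q j) → α A q < α A p
  timing : ∀ A (p q : ℕ → Bool), (ones A p).card = (ones A q).card →
    ∀ (hp : (ones A p).Nonempty) (hq : (ones A q).Nonempty),
      (ones A p).min' hp < (ones A q).min' hq → α A q < α A p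
  earlyBias : ∀ A (p q : ℕ → Bool) (i j : ℕ), i ∈ A → j ∈ A → i < j →
    p i = true → p j = false → q i = false → q j = true →
    (∀ k, k ≠ i → k ≠ j → p k = q k) → α A q < α A p

/-- Specification of the function `β` used in the (A)LARM scores: strictly increasing
with values in `[0,1]`. -/
structure BetaSpec (β : ℕ → ℝ) : Prop where
  mem_Icc : ∀ k, β k ∈ Set.Icc (0 : ℝ) 1
  strictMono : StrictMono β

/-- The LARM score. -/
noncomputable def LARM (n : ℕ) (α : Finset ℕ → (ℕ → Bool) → ℝ) (β : ℕ → ℝ)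
    (g p : ℕ → Bool) : ℝ :=
  (1 / ((runs (dom n) g true).card : ℝ)) *
    ∑ A ∈ (runs (dom n) g true).filter (fun A => 0 < (runs (ivl A) p true).card),
      (α (ivl A) p + 1) / 2 ^ ((runs (ivl A) p true).card)
  - 2 * ∑ N ∈ runs (dom n) g false, ((runs (ivl N) p true).card : ℝ)
  - ∑ N ∈ runs (dom n) g false, β ((ones (ivl N) p).card)

/-- `I_{01}(g)`: intervals that are a maximal `0`-run immediately followed by a maximal
`1`-run. -/
def runs01 (n : ℕ) (g : ℕ → Bool) : Finset (ℕ × ℕ) :=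
  ((dom n) ×ˢ (dom n)).filter (fun W =>
    ∃ b ∈ Finset.Ico W.1 W.2,
      (W.1, b) ∈ runs (dom n) g false ∧ (b + 1, W.2) ∈ runs (dom n) g true)

/-- `I_{10}(g)`: intervals that are a maximal `1`-run immediately followed by a maximal
`0`-run. -/
def runs10 (n : ℕ) (g : ℕ → Bool) : Finset (ℕ × ℕ) :=
  ((dom n) ×ˢ (dom n)).filter (fun W =>
    ∃ b ∈ Finset.Ico W.1 W.2,
      (W.1, b) ∈ runs (dom n) g true ∧ (b + 1, W.2) ∈ runs (dom n) g false)

/-- Early alarms `EA(p,g)`. -/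
def EA (n : ℕ) (p g : ℕ → Bool) : Finset (ℕ × ℕ) :=
  ((dom n) ×ˢ (dom n)).filter (fun A =>
    (∃ I ∈ runs01 n g, A ∈ runs (ivl I) p true) ∧
    (∃ i ∈ ivl A, g i = true) ∧ (∃ i ∈ ivl A, g i = false))

/-- Late alarms `LA(p,g)`. -/
def LA (n : ℕ) (p g : ℕ → Bool) : Finset (ℕ × ℕ) :=
  ((dom n) ×ˢ (dom n)).filter (fun A =>
    (∃ I ∈ runs10 n g, A ∈ runs (ivl I) p true) ∧
    (∃ i ∈ ivl A, g i = true) ∧ (∃ i ∈ ivl A, g i = false))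

/-- True false alarms `TA(p,g)`. -/
def TA (n : ℕ) (p g : ℕ → Bool) : Finset (ℕ × ℕ) :=
  (runs (dom n) p true).filter (fun A =>
    (∀ i ∈ ivl A, g i = false) ∧
    ∀ B ∈ EA n p g ∪ LA n p g, ¬ ivl A ⊆ ivl B)

/-- Detected anomalies `DA(p,g)`. -/
def DA (n : ℕ) (p g : ℕ → Bool) : Finset (ℕ × ℕ) :=
  (runs (dom n) g true).filter (fun A =>
    ∃ B ∈ runs (dom n) p true,
      (ivl B ∩ ivl A).Nonempty ∧
      (B.1 ∈ ivl A ∨ ∀ i ∈ Finset.Ico B.1 A.1, g i = false))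

/-- The ALARM score with alarm tolerance `t` (the averaged term is `0` when
`DA(p,g) = ∅`, since in Lean `0 / 0 = 0`). -/
noncomputable def ALARM (n t : ℕ) (α : Finset ℕ → (ℕ → Bool) → ℝ) (β : ℕ → ℝ)
    (g p : ℕ → Bool) : ℝ :=
  ((DA n p g).card : ℝ)
  + (∑ A ∈ DA n p g, (α (ivl A) p + 1) / 2 ^ ((runs (ivl A) p true).card)) /
      ((DA n p g).card : ℝ)
  - β (((dom n).filter (fun i => p i = true ∧ g i = false)).card)
  - (1 / (t : ℝ)) * (((TA n p g).card : ℝ) + (3 / 2) * ((EA n p g).card : ℝ)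
      + (1 / 2) * ((LA n p g).card : ℝ))

/-- Point-wise Recall. -/
noncomputable def recallPW (n : ℕ) (g p : ℕ → Bool) : ℝ :=
  (((dom n).filter (fun i => p i = true ∧ g i = true)).card : ℝ) /
    ((ones (dom n) g).card : ℝ)

/-- Point-wise F1-score. -/
noncomputable def f1PW (n : ℕ) (g p : ℕ → Bool) : ℝ :=
  2 * (((dom n).filter (fun i => p i = true ∧ g i = true)).card : ℝ) /
    (((ones (dom n) p).card : ℝ) + ((ones (dom n) g).card : ℝ))

/-- Total length of the ground-truth anomaly windows hit by `p`. -/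
def Spa (n : ℕ) (g p : ℕ → Bool) : ℕ :=
  ∑ W ∈ (runs (dom n) g true).filter (fun W => ∃ i ∈ ivl W, p i = true), (ivl W).card

/-- Point-adjusted Recall. -/
noncomputable def recallPA (n : ℕ) (g p : ℕ → Bool) : ℝ :=
  ((Spa n g p : ℝ)) / ((ones (dom n) g).card : ℝ)

/-- Point-adjusted F1-score. -/
noncomputable def f1PA (n : ℕ) (g p : ℕ → Bool) : ℝ :=
  2 * (Spa n g p : ℝ) /
    ((Spa n g p : ℝ) + (((dom n).filter (fun i => p i = true ∧ g i = false)).card : ℝ)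
      + ((ones (dom n) g).card : ℝ))

/-- Point-wise Precision. -/
noncomputable def precisionPW (n : ℕ) (g p : ℕ → Bool) : ℝ :=
  (((dom n).filter (fun i => p i = true ∧ g i = true)).card : ℝ) /
    ((ones (dom n) p).card : ℝ)

/-- Event-wise Recall. -/
noncomputable def recallEvent (n : ℕ) (g p : ℕ → Bool) : ℝ :=
  (((runs (dom n) g true).filter (fun W => ∃ i ∈ ivl W, p i = true)).card : ℝ) /
    ((runs (dom n) g true).card : ℝ)

/-- Composite F1-score. -/
noncomputable def Fc1 (n : ℕ) (g p : ℕ → Bool) : ℝ :=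
  2 * precisionPW n g p * recallEvent n g p / (precisionPW n g p + recallEvent n g p)

/-- Distance from `i` to the closest element of `S`. -/
noncomputable def minDist (i : ℕ) (S : Finset ℕ) : ℕ :=
  sInf {d : ℕ | ∃ j ∈ S, d = ((i : ℤ) - (j : ℤ)).natAbs}

/-- Temporal Distance. -/
noncomputable def TD (n : ℕ) (g p : ℕ → Bool) : ℕ :=
  ∑ i ∈ ones (dom n) g, minDist i (ones (dom n) p)
  + ∑ i ∈ ones (dom n) p, minDist i (ones (dom n) g)

/-- The set of ground-truth anomaly windows hit by `p`. -/
def Dset (n : ℕ) (g p : ℕ → Bool) : Finset (ℕ × ℕ) :=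
  (runs (dom n) g true).filter (fun W => ∃ i ∈ ivl W, p i = true)

/-- Delay of the first alarm of `p` within the window `W`. -/
noncomputable def delay (p : ℕ → Bool) (W : ℕ × ℕ) : ℕ :=
  sInf {i : ℕ | i ∈ ivl W ∧ p i = true} - W.1

/-- Average Alert Delay. -/
noncomputable def AAD (n : ℕ) (g p : ℕ → Bool) : ℝ :=
  (∑ W ∈ Dset n g p, (delay p W : ℝ)) / ((Dset n g p).card : ℝ)


lemma mem_runs {A : Finset ℕ} {s : ℕ → Bool} {v : Bool} {W : ℕ × ℕ} :
    W ∈ runs A s v ↔ W.1 ∈ A ∧ W.2 ∈ A ∧ W.1 ≤ W.2 ∧ ivl W ⊆ A ∧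
      (∀ i ∈ ivl W, s i = v) ∧
      (W.1 - 1 ∈ A → s (W.1 - 1) ≠ v) ∧ (W.2 + 1 ∈ A → s (W.2 + 1) ≠ v) := by
  simp [runs, Finset.mem_filter, Finset.mem_product, and_assoc]

/-- Two maximal runs (same value) that intersect are equal. -/
lemma runs_eq_of_inter {n : ℕ} {s : ℕ → Bool} {v : Bool} {W A : ℕ × ℕ}
    (hW : W ∈ runs (dom n) s v) (hA : A ∈ runs (dom n) s v)
    (h : ∃ x, x ∈ ivl W ∧ x ∈ ivl A) : W = A := by
  obtain ⟨x, hxW, hxA⟩ := h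
  rw [mem_runs] at hW hA
  obtain ⟨hW1, hW2, hWle, hWsub, hWval, hWl, hWr⟩ := hW
  obtain ⟨hA1, hA2, hAle, hAsub, hAval, hAl, hAr⟩ := hA
  simp only [ivl, Finset.mem_Icc] at hxW hxA
  simp only [dom, Finset.mem_Icc] at hW1 hW2 hA1 hA2
  have key : ∀ (a b c d : ℕ), a ≤ b → c ≤ d → 1 ≤ a → b ≤ n → 1 ≤ c → d ≤ n →
      (∀ i ∈ ivl (a, b), s i = v) → (c - 1 ∈ dom n → s (c - 1) ≠ v) →
      a ≤ x → x ≤ b → c ≤ x → a = c ∨ c < a := by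
    intro a b c d hab hcd h1a hbn h1c hdn hval hbl hax hxb hcx
    rcases lt_trichotomy a c with h | h | h
    · exfalso
      apply hbl
      · simp only [dom, Finset.mem_Icc]
        omega
      · apply hval
        simp only [ivl, Finset.mem_Icc]
        omega
    · exact Or.inl h
    · exact Or.inr h
  have h1 : W.1 = A.1 := by
    rcases key W.1 W.2 A.1 A.2 hWle hAle hW1.1 hW2.2 hA1.1 hA2.2 hWval hAl
        hxW.1 hxW.2 hxA.1 with h | h
    · exact h
    · rcases key A.1 A.2 W.1 W.2 hAle hWle hA1.1 hA2.2 hW1.1 hW2.2 hAval hWl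
          hxA.1 hxA.2 hxW.1 with h' | h' <;> omega
  have key2 : ∀ (a b c d : ℕ), a ≤ b → c ≤ d → 1 ≤ a → b ≤ n → 1 ≤ c → d ≤ n →
      (∀ i ∈ ivl (a, b), s i = v) → (c + 1 ∈ dom n → s (c + 1) ≠ v) →
      a ≤ x → x ≤ b → x ≤ c → b = c ∨ b < c := by
    intro a b c d hab hcd h1a hbn h1c hdn hval hbr hax hxb hxc
    rcases lt_trichotomy b c with h | h | h
    · exact Or.inr h
    · exact Or.inl h
    · exfalso
      apply hbr
      · simp only [dom, Finset.mem_Icc]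
        omega
      · apply hval
        simp only [ivl, Finset.mem_Icc]
        omega
  have h2 : W.2 = A.2 := by
    rcases key2 A.1 A.2 W.2 n hAle hW2.2 hA1.1 hA2.2 hW2.1 le_rfl hAval hWr
        hxA.1 hxA.2 hxW.2 with h | h
    · omega
    · rcases key2 W.1 W.2 A.2 n hWle hA2.2 hW1.1 hW2.2 hA2.1 le_rfl hWval hAr
          hxW.1 hxW.2 hxA.2 with h' | h' <;> omega
  exact Prod.ext h1 h2

/-- A 1-run and a 0-run of `g` are disjoint. -/
lemma runs_disjoint {n : ℕ} {g : ℕ → Bool} {W N : ℕ × ℕ}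
    (hW : W ∈ runs (dom n) g true) (hN : N ∈ runs (dom n) g false) :
    ∀ i ∈ ivl W, i ∉ ivl N := by
  intro i hiW hiN
  rw [mem_runs] at hW hN
  have h1 := hW.2.2.2.2.1 i hiW
  have h2 := hN.2.2.2.2.1 i hiN
  simp [h1] at h2

lemma delay_congr {p q : ℕ → Bool} {W : ℕ × ℕ}
    (h : ∀ i ∈ ivl W, p i = q i) : delay p W = delay q W := by
  unfold delay
  congr 1
  congr 1
  ext i
  simp only [Set.mem_setOf_eq]
  constructor <;> rintro ⟨hi, hv⟩ <;> exact ⟨hi, by rw [h i hi] at * <;> assumption⟩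

lemma delay_eq_min' {p : ℕ → Bool} {W : ℕ × ℕ} (h : (ones (ivl W) p).Nonempty) :
    delay p W = (ones (ivl W) p).min' h - W.1 := by
  unfold delay
  congr 1
  have hset : {i : ℕ | i ∈ ivl W ∧ p i = true} = ↑(ones (ivl W) p) := by
    ext i; simp [ones]
  rw [hset]
  apply le_antisymm
  · exact Nat.sInf_le (by simpa using Finset.min'_mem _ h)
  · apply Finset.min'_le
    have := Nat.sInf_mem (s := (↑(ones (ivl W) p) : Set ℕ)) (by simpa using h)
    simpa using this

/-- A metric based on the Average Alert Delay via a strictly decreasing function satisfies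
Properties 5 (invariance under permutation of false positives) and 8 (alarm timing). -/
theorem aad_properties (n : ℕ) (hn : 1 ≤ n) (g : ℕ → Bool)
    (f : ℝ → ℝ) (hf : StrictAnti f) :
    (∀ p q : ℕ → Bool, ∀ N ∈ runs (dom n) g false,
      (∀ i ∈ dom n, i ∉ ivl N → p i = q i) →
      (ones (dom n) p).card = (ones (dom n) q).card →
      (runs (ivl N) p true).card = (runs (ivl N) q true).card →
      (Dset n g p).Nonempty →
      f (AAD n g p) = f (AAD n g q)) ∧
    (∀ p q : ℕ → Bool, ∀ A ∈ runs (dom n) g true,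
      (∀ i ∈ dom n, i ∉ ivl A → p i = q i) →
      (runs (ivl A) p true).card = (runs (ivl A) q true).card →
      (ones (dom n) p).card = (ones (dom n) q).card →
      ∀ (hpne : (ones (ivl A) p).Nonempty) (hqne : (ones (ivl A) q).Nonempty),
      (ones (ivl A) p).min' hpne < (ones (ivl A) q).min' hqne →
      f (AAD n g p) > f (AAD n g q)) := by
  constructor
  · -- Property 5
    intro p q N hN hpq _ _ _
    have hagree : ∀ W ∈ runs (dom n) g true, ∀ i ∈ ivl W, p i = q i := by
      intro W hW i hi
      have hsub : ivl W ⊆ dom n := (mem_runs.mp hW).2.2.2.1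
      exact hpq i (hsub hi) (runs_disjoint hW hN i hi)
    have hD : Dset n g p = Dset n g q := by
      unfold Dset
      apply Finset.filter_congr
      intro W hW
      constructor <;> rintro ⟨i, hi, hv⟩ <;>
        exact ⟨i, hi, by rw [hagree W hW i hi] at * <;> assumption⟩
    have hsum : ∑ W ∈ Dset n g p, (delay p W : ℝ) = ∑ W ∈ Dset n g q, (delay q W : ℝ) := by
      rw [← hD]
      apply Finset.sum_congr rfl
      intro W hW
      have hW' : W ∈ runs (dom n) g true := Finset.mem_filter.mp hW |>.1
      rw [delay_congr (hagree W hW')]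
    unfold AAD
    rw [hsum, hD]
  · -- Property 8
    intro p q A hA hpq _ _ hpne hqne hmin
    have hagree : ∀ W ∈ runs (dom n) g true, W ≠ A → ∀ i ∈ ivl W, p i = q i := by
      intro W hW hne i hi
      have hsub : ivl W ⊆ dom n := (mem_runs.mp hW).2.2.2.1
      apply hpq i (hsub hi)
      intro hiA
      exact hne (runs_eq_of_inter hW hA ⟨i, hi, hiA⟩)
    have hAmemp : A ∈ Dset n g p := by
      obtain ⟨i, hi⟩ := hpne
      simp only [ones, Finset.mem_filter] at hi
      exact Finset.mem_filter.mpr ⟨hA, i, hi.1, hi.2⟩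
    have hAmemq : A ∈ Dset n g q := by
      obtain ⟨i, hi⟩ := hqne
      simp only [ones, Finset.mem_filter] at hi
      exact Finset.mem_filter.mpr ⟨hA, i, hi.1, hi.2⟩
    have hD : Dset n g p = Dset n g q := by
      unfold Dset
      apply Finset.filter_congr
      intro W hW
      by_cases hne : W = A
      · subst hne
        constructor <;> intro _
        · obtain ⟨i, hi⟩ := hqne
          simp only [ones, Finset.mem_filter] at hi
          exact ⟨i, hi.1, hi.2⟩
        · obtain ⟨i, hi⟩ := hpne
          simp only [ones, Finset.mem_filter] at hi
          exact ⟨i, hi.1, hi.2⟩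
      · constructor <;> rintro ⟨i, hi, hv⟩ <;>
          exact ⟨i, hi, by rw [hagree W hW hne i hi] at * <;> assumption⟩
    have hA1le : A.1 ≤ (ones (ivl A) p).min' hpne := by
      have := Finset.min'_mem _ hpne
      simp only [ones, Finset.mem_filter, ivl, Finset.mem_Icc] at this
      exact this.1.1
    have hdlt : delay p A < delay q A := by
      rw [delay_eq_min' hpne, delay_eq_min' hqne]
      omega
    have hsum : ∑ W ∈ Dset n g p, (delay p W : ℝ) < ∑ W ∈ Dset n g q, (delay q W : ℝ) := by
      rw [← hD]
      apply Finset.sum_lt_sum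
      · intro W hW
        have hW' : W ∈ runs (dom n) g true := Finset.mem_filter.mp hW |>.1
        by_cases hne : W = A
        · subst hne
          exact_mod_cast hdlt.le
        · rw [delay_congr (hagree W hW' hne)]
      · exact ⟨A, hAmemp, by exact_mod_cast hdlt⟩
    have hcard : (0 : ℝ) < ((Dset n g p).card : ℝ) := by
      exact_mod_cast Finset.card_pos.mpr ⟨A, hAmemp⟩
    have hAADlt : AAD n g p < AAD n g q := by
      unfold AAD
      rw [← hD]
      exact div_lt_div_of_pos_right (by rw [hD] at hsum ⊢; rw [← hD] at hsum ⊢; exact hsum) hcard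
    exact hf hAADlt

end TSAD
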